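/- Let ξ be an indeterminate and let Φ : ℂ[x,y] → ℂ[ξ][x,x⁻¹] be the ℂ-algebra homomorphism with Φ(x) = x and Φ(y) = x⁻¹ + ξx⁻² (Φ is injective). For nonzero f ∈ ℂ[x,y] define δ(f) := deg_x(Φ(f)), the largest exponent of x occurring in Φ(f). Then: (a) δ(f) ≥ −deg(f) for every f ∈ ℂ[x,y] \ ℂ; (b) δ(y) = −1 and deg(y) = 1, so min{δ(f)/deg(f) : f ∈ ℂ[x,y] \ ℂ} = −1; and (c) deg_x(Φ(y) − x⁻¹) = −2, so the minimum in (b) is strictly greater than δ(y − x⁻¹)/deg(y − x⁻¹) = −2, where y − x⁻¹ is the last key form of δ. In particular, the skewness identity α(δ) = inf{δ(f)/(d_δ·deg f) : f ∈ ℂ[x,y] \ ℂ} fails for this δ, since α(δ) = −2 while the infimum equals −1. -/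

import Mathlib

open Polynomial LaurentPolynomial

noncomputable section

set_option maxHeartbeats 1000000
set_option synthInstance.maxHeartbeats 400000

/-- The polynomial ring `ℂ[x,y]`, with `x = X 0` and `y = X 1`. -/
abbrev Pxy : Type := MvPolynomial (Fin 2) ℂ

/-- The Laurent polynomial ring `ℂ[ξ][x,x⁻¹]` (`ξ = Polynomial.X`). -/
abbrev LPx : Type := LaurentPolynomial (Polynomial ℂ)

/-- For a nonzero `h ∈ ℂ[ξ][x,x⁻¹]`, the largest exponent of `x` occurring in `h`. -/
def degx (h : LPx) : ℤ := sSup {k : ℤ | h.coeff k ≠ 0}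

/-- The ℂ-algebra homomorphism `Φ : ℂ[x,y] → ℂ[ξ][x,x⁻¹]` with `Φ x = x` and
`Φ y = x⁻¹ + ξ x⁻²`. -/
noncomputable def Phi : Pxy →ₐ[ℂ] LPx :=
  MvPolynomial.aeval
    ![LaurentPolynomial.T 1,
      LaurentPolynomial.T (-1) + LaurentPolynomial.C Polynomial.X * LaurentPolynomial.T (-2)]

/-- The set `{δ(f)/deg(f) : f ∈ ℂ[x,y] \ ℂ} ⊆ ℝ` for `δ f := deg_x (Φ f)` and `deg` the total
degree. -/
def ratioSet : Set ℝ :=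
  {r : ℝ | ∃ f : Pxy, (¬ ∃ c : ℂ, f = MvPolynomial.C c) ∧
    r = (degx (Phi f) : ℝ) / (f.totalDegree : ℝ)}

/-!
Write `f = ∑ c_{ij} x^i y^j`. Since `Φ(x^i y^j) = x^{i-j} (1 + ξ x⁻¹)^j`, grouping the monomials
along the diagonals `i - j = e` gives `Φ f = ∑_e x^e P_e(ξ x⁻¹)` with
`P_e(w) = ∑_{i-j=e} c_{ij} (w + 1)^j`, and the coefficient of `ξ^m x^k` in `Φ f` is the
coefficient of `w^m` in `P_{k+m}`: different diagonals never cancel. The polynomials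
`(w + 1)^j` are linearly independent, so `P_e ≠ 0` on every occupied diagonal.

Take an occupied diagonal `e` and the least `j₀` occurring on it. Then `(w + 1)^{j₀}` divides
`P_e`, so the lowest term `w^v` of `P_e` has `v + j₀ ≤ deg P_e ≤ deg f`. It yields the monomial
`ξ^v x^{e - v}` of `Φ f`, and `e - v ≥ -j₀ - v ≥ -deg f`. This gives (a) and injectivity;
`y` attains the bound, while `Φ y - x⁻¹ = ξ x⁻²`.
-/

namespace LaurentPolynomial

variable {R : Type*}

lemma coeff_C_mul_T [Semiring R] (r : R) (n k : ℤ) :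
    (C r * T n).coeff k = if n = k then r else 0 := by
  rw [← single_eq_C_mul_T, AddMonoidAlgebra.coeff_single, Finsupp.single_apply]

lemma one_add_C_mul_T_neg_one_pow [CommSemiring R] (a : R) (n : ℕ) :
    (1 + C a * T (-1)) ^ n = ∑ t ∈ Finset.range (n + 1), C (a ^ t * n.choose t) * T (-t) := by
  rw [add_comm, add_pow]
  refine Finset.sum_congr rfl fun t _ => ?_
  rw [one_pow, mul_one, mul_pow, T_pow, ← map_pow, ← map_natCast C, map_mul]
  simp only [mul_neg, mul_one]
  ring

end LaurentPolynomial

lemma Polynomial.natTrailingDegree_add_natDegree_le_of_dvd {R : Type*} [Semiring R]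
    [NoZeroDivisors R] {p q : R[X]} (hq : q.coeff 0 ≠ 0) (hdvd : q ∣ p) (hp : p ≠ 0) :
    p.natTrailingDegree + q.natDegree ≤ p.natDegree := by
  obtain ⟨r, rfl⟩ := hdvd
  have hq0 : q ≠ 0 := fun h => hq (by rw [h, Polynomial.coeff_zero])
  have hr0 : r ≠ 0 := right_ne_zero_of_mul hp
  rw [Polynomial.natTrailingDegree_mul hq0 hr0, Polynomial.natDegree_mul hq0 hr0,
    Polynomial.natTrailingDegree_eq_zero.mpr (Or.inr hq)]
  have := r.natTrailingDegree_le_natDegree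
  omega

lemma Phi_monomial (s : Fin 2 →₀ ℕ) (c : ℂ) :
    Phi (MvPolynomial.monomial s c) = LaurentPolynomial.C (Polynomial.C c) * T (s 0 - s 1) *
      (1 + LaurentPolynomial.C Polynomial.X * T (-1)) ^ s 1 := by
  have hy : (T (-1) + LaurentPolynomial.C Polynomial.X * T (-2) : LPx) =
      T (-1) * (1 + LaurentPolynomial.C Polynomial.X * T (-1)) := by
    rw [mul_add, mul_one, mul_left_comm, ← T_add]; norm_num
  rw [Phi, MvPolynomial.aeval_monomial, Finsupp.prod_fintype _ _ fun _ => pow_zero _,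
    Fin.prod_univ_two]
  simp only [Matrix.cons_val_zero, Matrix.cons_val_one, Matrix.cons_val_fin_one, hy, mul_pow,
    T_pow, sub_eq_add_neg, T_add, LaurentPolynomial.algebraMap_apply, Polynomial.algebraMap_eq,
    mul_one, mul_neg_one]
  ring

lemma coeff_coeff_Phi_monomial (s : Fin 2 →₀ ℕ) (c : ℂ) (k : ℤ) (m : ℕ) :
    ((Phi (MvPolynomial.monomial s c)).coeff k).coeff m =
      if (s 0 : ℤ) - s 1 = k + m then c * (s 1).choose m else 0 := by
  have hterm : ∀ t : ℕ, LaurentPolynomial.C (Polynomial.C c) * T (s 0 - s 1) *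
      (LaurentPolynomial.C (Polynomial.X ^ t * (s 1).choose t) * T (-t)) =
      LaurentPolynomial.C (Polynomial.C (c * (s 1).choose t) * Polynomial.X ^ t) *
        T (s 0 - s 1 - t) := by
    intro t
    rw [sub_eq_add_neg _ (t : ℤ), T_add]
    simp only [map_mul, map_natCast]
    ring
  rw [Phi_monomial, one_add_C_mul_T_neg_one_pow, Finset.mul_sum, AddMonoidAlgebra.coeff_sum]
  simp only [hterm, Finset.sum_apply', coeff_C_mul_T, Polynomial.finsetSum_coeff]
  rw [Finset.sum_eq_single m]
  · rw [apply_ite (Polynomial.coeff · m), Polynomial.coeff_C_mul_X_pow, if_pos rfl,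
      Polynomial.coeff_zero]
    exact if_congr (by omega) rfl rfl
  · intro t _ htm
    rw [apply_ite (Polynomial.coeff · m), Polynomial.coeff_C_mul_X_pow, if_neg (Ne.symm htm),
      Polynomial.coeff_zero, ite_self]
  · intro hm
    rw [Nat.choose_eq_zero_of_lt (by simpa [Nat.lt_succ_iff] using hm)]
    simp

def diagonalPoly (f : Pxy) (e : ℤ) : ℂ[X] :=
  ∑ s ∈ f.support with (s 0 : ℤ) - s 1 = e,
    MvPolynomial.coeff s f • (Polynomial.X + 1) ^ s 1

lemma coeff_diagonalPoly (f : Pxy) (e : ℤ) (m : ℕ) :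
    (diagonalPoly f e).coeff m =
      ∑ s ∈ f.support with (s 0 : ℤ) - s 1 = e, MvPolynomial.coeff s f * (s 1).choose m := by
  simp only [diagonalPoly, Polynomial.finsetSum_coeff, Polynomial.coeff_smul,
    Polynomial.coeff_X_add_one_pow, smul_eq_mul]

lemma coeff_coeff_Phi (f : Pxy) (k : ℤ) (m : ℕ) :
    ((Phi f).coeff k).coeff m = (diagonalPoly f (k + m)).coeff m := by
  conv_lhs => rw [f.as_sum]
  rw [map_sum, AddMonoidAlgebra.coeff_sum, Finset.sum_apply', Polynomial.finsetSum_coeff,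
    coeff_diagonalPoly, Finset.sum_filter]
  exact Finset.sum_congr rfl fun s _ => coeff_coeff_Phi_monomial s _ k m

lemma eq_of_sub_eq_of_apply_one_eq {s t : Fin 2 →₀ ℕ} (hst : (s 0 : ℤ) - s 1 = t 0 - t 1)
    (h1 : s 1 = t 1) : s = t := by
  ext a
  fin_cases a
  · simp only [Fin.zero_eta]; omega
  · exact h1

lemma diagonalPoly_ne_zero {f : Pxy} {s : Fin 2 →₀ ℕ} (hs : s ∈ f.support) :
    diagonalPoly f (s 0 - s 1) ≠ 0 := by
  obtain ⟨t, ht, htmax⟩ := (f.support.filter fun t => (t 0 : ℤ) - t 1 = s 0 - s 1)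
    |>.exists_max_image (fun t => t 1) ⟨s, Finset.mem_filter.mpr ⟨hs, rfl⟩⟩
  have htop : (diagonalPoly f (s 0 - s 1)).coeff (t 1) = MvPolynomial.coeff t f := by
    rw [coeff_diagonalPoly, Finset.sum_eq_single_of_mem t ht, Nat.choose_self, Nat.cast_one,
      mul_one]
    intro u hu hut
    have hlt : u 1 < t 1 := (htmax u hu).lt_of_ne fun h => hut <| eq_of_sub_eq_of_apply_one_eq
      (by rw [(Finset.mem_filter.mp hu).2, (Finset.mem_filter.mp ht).2]) h
    rw [Nat.choose_eq_zero_of_lt hlt, Nat.cast_zero, mul_zero]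
  intro h
  rw [h, Polynomial.coeff_zero] at htop
  exact MvPolynomial.mem_support_iff.mp (Finset.mem_filter.mp ht).1 htop.symm

lemma natDegree_diagonalPoly_le (f : Pxy) (e : ℤ) :
    (diagonalPoly f e).natDegree ≤ f.totalDegree := by
  refine Polynomial.natDegree_sum_le_of_forall_le _ _ fun s hs => ?_
  refine (Polynomial.natDegree_smul_le _ _).trans ?_
  rw [← Polynomial.C_1, Polynomial.natDegree_pow_X_add_C]
  exact (MvPolynomial.monomial_le_degreeOf 1 (Finset.mem_filter.mp hs).1).trans
    (f.degreeOf_le_totalDegree 1)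

lemma pow_dvd_diagonalPoly {f : Pxy} {e : ℤ} {j : ℕ}
    (hj : ∀ s ∈ f.support, (s 0 : ℤ) - s 1 = e → j ≤ s 1) :
    (Polynomial.X + 1) ^ j ∣ diagonalPoly f e := by
  refine Finset.dvd_sum fun s hs => ?_
  rw [Polynomial.smul_eq_C_mul]
  exact dvd_mul_of_dvd_right (pow_dvd_pow _ (hj s (Finset.mem_filter.mp hs).1
    (Finset.mem_filter.mp hs).2)) _

lemma exists_neg_totalDegree_le_coeff_Phi_ne_zero {f : Pxy} (hf : f ≠ 0) :
    ∃ k : ℤ, -(f.totalDegree : ℤ) ≤ k ∧ (Phi f).coeff k ≠ 0 := by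
  obtain ⟨s, hs⟩ := MvPolynomial.support_nonempty.mpr hf
  obtain ⟨t, ht, htmin⟩ := (f.support.filter fun t => (t 0 : ℤ) - t 1 = s 0 - s 1)
    |>.exists_min_image (fun t => t 1) ⟨s, Finset.mem_filter.mpr ⟨hs, rfl⟩⟩
  obtain ⟨ht, hdiag⟩ := Finset.mem_filter.mp ht
  set P := diagonalPoly f (t 0 - t 1)
  have hP : P ≠ 0 := diagonalPoly_ne_zero ht
  have hdvd : (Polynomial.X + 1) ^ t 1 ∣ P := pow_dvd_diagonalPoly fun u hu hut =>
    htmin u (Finset.mem_filter.mpr ⟨hu, hut.trans hdiag⟩)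
  have hlow := Polynomial.natTrailingDegree_add_natDegree_le_of_dvd
    (by simp [Polynomial.coeff_X_add_one_pow]) hdvd hP
  rw [← Polynomial.C_1, Polynomial.natDegree_pow_X_add_C] at hlow
  refine ⟨t 0 - t 1 - P.natTrailingDegree, ?_, fun h => ?_⟩
  · have : P.natDegree ≤ f.totalDegree := natDegree_diagonalPoly_le f _
    omega
  · have hcoeff := coeff_coeff_Phi f (t 0 - t 1 - P.natTrailingDegree) P.natTrailingDegree
    rw [h, sub_add_cancel] at hcoeff
    exact Polynomial.trailingCoeff_nonzero_iff_nonzero.mpr hP hcoeff.symm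

theorem Phi_injective : Function.Injective Phi := by
  refine (injective_iff_map_eq_zero Phi).mpr fun f hf => ?_
  by_contra hne
  obtain ⟨k, -, hk⟩ := exists_neg_totalDegree_le_coeff_Phi_ne_zero hne
  rw [hf] at hk
  exact hk rfl

lemma le_degx {h : LPx} {k : ℤ} (hk : h.coeff k ≠ 0) : k ≤ degx h :=
  le_csSup (h.coeff.support.finite_toSet.bddAbove.mono fun _ => Finsupp.mem_support_iff.mpr) hk

lemma degx_eq_of_coeff_ne_zero {h : LPx} {n : ℤ} (hn : h.coeff n ≠ 0)
    (hgt : ∀ k, n < k → h.coeff k = 0) :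
    degx h = n :=
  IsGreatest.csSup_eq ⟨hn, fun k hk => not_lt.mp fun hlt => hk (hgt k hlt)⟩

theorem neg_totalDegree_le_degx_Phi {f : Pxy} (hf : f ≠ 0) :
    -(f.totalDegree : ℤ) ≤ degx (Phi f) :=
  let ⟨_, hle, hk⟩ := exists_neg_totalDegree_le_coeff_Phi_ne_zero hf
  hle.trans (le_degx hk)

lemma Phi_X_one : Phi (MvPolynomial.X 1) =
    T (-1) + LaurentPolynomial.C Polynomial.X * T (-2) := by
  rw [Phi, MvPolynomial.aeval_X]
  rfl

lemma degx_Phi_X_one : degx (Phi (MvPolynomial.X 1)) = -1 := by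
  rw [Phi_X_one]
  refine degx_eq_of_coeff_ne_zero ?_ fun k hk => ?_
  · simp [coeff_C_mul_T]
  · simp [coeff_C_mul_T, hk.ne, (hk.trans' (by norm_num : (-2 : ℤ) < -1)).ne]

lemma degx_Phi_X_one_sub_T : degx (Phi (MvPolynomial.X 1) - T (-1)) = -2 := by
  rw [Phi_X_one, add_sub_cancel_left]
  refine degx_eq_of_coeff_ne_zero ?_ fun k hk => ?_
  · simp [coeff_C_mul_T]
  · simp [coeff_C_mul_T, hk.ne]

theorem isLeast_ratioSet : IsLeast ratioSet (-1) := by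
  refine ⟨⟨MvPolynomial.X 1, fun ⟨c, hc⟩ => ?_, ?_⟩, ?_⟩
  · simpa [hc] using MvPolynomial.totalDegree_X (R := ℂ) (1 : Fin 2)
  · rw [degx_Phi_X_one, MvPolynomial.totalDegree_X]; norm_num
  · rintro r ⟨f, hf, rfl⟩
    have hdeg : 0 < f.totalDegree := Nat.pos_of_ne_zero fun h =>
      hf ⟨_, MvPolynomial.totalDegree_eq_zero_iff_eq_C.mp h⟩
    have hδ : -(f.totalDegree : ℝ) ≤ degx (Phi f) := by
      exact_mod_cast neg_totalDegree_le_degx_Phi fun h => hf ⟨0, by rw [h, map_zero]⟩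
    rw [le_div_iff₀ (by exact_mod_cast hdeg)]
    linarith

theorem skewness_identity_fails :
    Function.Injective Phi ∧
    -- (a) δ(f) ≥ -deg(f) for every nonconstant f ∈ ℂ[x,y]
    (∀ f : Pxy, (¬ ∃ c : ℂ, f = MvPolynomial.C c) →
      -(f.totalDegree : ℤ) ≤ degx (Phi f)) ∧
    -- (b) δ(y) = -1, deg(y) = 1, and min{δ(f)/deg(f)} = -1
    degx (Phi (MvPolynomial.X 1)) = -1 ∧
    (MvPolynomial.X 1 : Pxy).totalDegree = 1 ∧
    IsLeast ratioSet (-1) ∧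
    -- (c) deg_x(Φ(y) - x⁻¹) = -2, and the minimum in (b) is strictly greater than
    --     δ(y - x⁻¹)/deg(y - x⁻¹) = -2, where y - x⁻¹ is the last key form of δ
    degx (Phi (MvPolynomial.X 1) - LaurentPolynomial.T (-1)) = -2 ∧
    (∀ r : ℝ, IsLeast ratioSet r →
      (degx (Phi (MvPolynomial.X 1) - LaurentPolynomial.T (-1)) : ℝ) < r) := by
  refine ⟨Phi_injective, fun f hf => neg_totalDegree_le_degx_Phi ?_, degx_Phi_X_one,
    MvPolynomial.totalDegree_X 1, isLeast_ratioSet, degx_Phi_X_one_sub_T, fun r hr => ?_⟩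
  · rintro rfl
    exact hf ⟨0, (map_zero _).symm⟩
  · rw [hr.unique isLeast_ratioSet, degx_Phi_X_one_sub_T]
    norm_num
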